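/- For the completely multiplicative function χ̃₃, there is an absolute constant K such that for all N > 1, sup_{n ≤ N, d ≥ 1} |∑_{j=1}^n χ̃₃(jd)| ≤ K · log N. (Combined with the lower bound along n_k, the restricted discrepancy sup_{n ≤ N, d} |∑_{j=1}^n χ̃₃(jd)| is comparable to log N.) -/

import Mathlib

/-!
Complete multiplicativity gives `∑_{j ≤ n} χ̃₃(jd) = χ̃₃(d) S(n)`, where
`S(n) = ∑_{j ≤ n} χ̃₃(j)`. Since `χ̃₃(3k) = χ̃₃(k)`, `χ̃₃(3k+1) = 1` and `χ̃₃(3k+2) = -1`,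
the partial sums satisfy `S(3m + r) = S(m) + [r = 1]`, so `S(n)` counts the digits `1` in the
ternary expansion of `n` and is at most `log₃ n + 1`.
-/

open Finset Real

theorem abs_eq_one_of_multiplicative {g : ℕ → ℤ} (h1 : g 1 = 1)
    (hmul : ∀ m n : ℕ, 0 < m → 0 < n → g (m * n) = g m * g n)
    (hprime : ∀ p : ℕ, p.Prime → |g p| = 1) {m : ℕ} (hm : 0 < m) : |g m| = 1 := by
  induction m using induction_on_primes with
  | zero => omega
  | one => simp [h1]
  | prime_mul p a hp ih =>
    have ha : 0 < a := Nat.pos_of_mul_pos_left hm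
    rw [hmul p a hp.pos ha, abs_mul, hprime p hp, ih ha, one_mul]

theorem eq_ite_of_mod_three_ne_zero {g : ℕ → ℤ} (h1 : g 1 = 1)
    (hmul : ∀ m n : ℕ, 0 < m → 0 < n → g (m * n) = g m * g n)
    (hp : ∀ p : ℕ, p.Prime → p ≠ 3 → g p = if p % 3 = 1 then 1 else -1)
    {m : ℕ} (hm : m % 3 ≠ 0) : g m = if m % 3 = 1 then 1 else -1 := by
  induction m using induction_on_primes with
  | zero => simp at hm
  | one => simp [h1]
  | prime_mul p a hprime ih =>
    have hp3 : p % 3 ≠ 0 := fun h => hm (by simp [Nat.mul_mod, h])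
    have ha3 : a % 3 ≠ 0 := fun h => hm (by simp [Nat.mul_mod, h])
    have hpne : p ≠ 3 := by rintro rfl; simp at hp3
    have ha : 0 < a := Nat.pos_of_ne_zero (by rintro rfl; simp at ha3)
    rw [hmul p a hprime.pos ha, hp p hprime hpne, ih ha3, Nat.mul_mod]
    rcases (by omega : p % 3 = 1 ∨ p % 3 = 2) with hpr | hpr <;>
      rcases (by omega : a % 3 = 1 ∨ a % 3 = 2) with har | har <;> simp [hpr, har]

theorem sum_Icc_three_mul {g : ℕ → ℤ} (h30 : ∀ k : ℕ, 0 < k → g (3 * k) = g k)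
    (h31 : ∀ k : ℕ, g (3 * k + 1) = 1) (h32 : ∀ k : ℕ, g (3 * k + 2) = -1) (m : ℕ) :
    ∑ j ∈ Icc 1 (3 * m), g j = ∑ j ∈ Icc 1 m, g j := by
  induction m with
  | zero => rfl
  | succ m ih =>
    rw [show 3 * (m + 1) = 3 * m + 2 + 1 by ring, sum_Icc_succ_top (by omega),
      sum_Icc_succ_top (by omega), sum_Icc_succ_top (by omega), ih,
      sum_Icc_succ_top (by omega), show 3 * m + 2 + 1 = 3 * (m + 1) by ring,
      h30 _ m.succ_pos, h31, h32]
    ring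

theorem sum_Icc_three_mul_add {g : ℕ → ℤ} (h30 : ∀ k : ℕ, 0 < k → g (3 * k) = g k)
    (h31 : ∀ k : ℕ, g (3 * k + 1) = 1) (h32 : ∀ k : ℕ, g (3 * k + 2) = -1)
    {m r : ℕ} (hr : r < 3) :
    ∑ j ∈ Icc 1 (3 * m + r), g j = ∑ j ∈ Icc 1 m, g j + if r = 1 then 1 else 0 := by
  have hthree_mul := sum_Icc_three_mul h30 h31 h32 m
  interval_cases r
  · simp [hthree_mul]
  · rw [sum_Icc_succ_top (by omega), hthree_mul, h31]; simp
  · rw [sum_Icc_succ_top (by omega), sum_Icc_succ_top (by omega), hthree_mul, h31, h32]; simp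

theorem sum_Icc_eq_count_one_digits {g : ℕ → ℤ} (h30 : ∀ k : ℕ, 0 < k → g (3 * k) = g k)
    (h31 : ∀ k : ℕ, g (3 * k + 1) = 1) (h32 : ∀ k : ℕ, g (3 * k + 2) = -1) (n : ℕ) :
    ∑ j ∈ Icc 1 n, g j = (Nat.digits 3 n).count 1 := by
  induction n using Nat.strong_induction_on with
  | _ n ih =>
    rcases Nat.eq_zero_or_pos n with rfl | hn
    · simp
    conv_lhs => rw [← Nat.div_add_mod n 3]
    rw [sum_Icc_three_mul_add h30 h31 h32 (Nat.mod_lt _ (by norm_num)), ih _ (by omega),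
      Nat.digits_def' (by norm_num) hn, List.count_cons]
    simp

theorem natLog_add_one_le_mul_log {b N : ℕ} (hN : 2 ≤ N) :
    (Nat.log b N : ℝ) + 1 ≤ ((log b)⁻¹ + (log 2)⁻¹) * log N := by
  have hlog2 : log 2 ≤ log N := log_le_log two_pos (by exact_mod_cast hN)
  have hnat : (Nat.log b N : ℝ) ≤ log N / log b := by
    simpa [logb] using natLog_le_logb N b
  have hone : 1 ≤ log N / log 2 := (one_le_div (log_pos one_lt_two)).mpr hlog2
  linarith [show ((log b)⁻¹ + (log 2)⁻¹) * log N = log N / log b + log N / log 2 by ring]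

/-- The discrepancy of `χ̃₃` restricted to `n ≤ N` grows at most logarithmically:
there is an absolute constant `K` with
`sup_{n ≤ N, d ≥ 1} |∑_{j=1}^n χ̃₃(jd)| ≤ K log N` for all `N > 1`. -/
theorem bcc_discrepancy_log_upper (g : ℕ → ℤ)
    (h1 : g 1 = 1)
    (hmul : ∀ m n : ℕ, 0 < m → 0 < n → g (m * n) = g m * g n)
    (hp : ∀ p : ℕ, p.Prime → p ≠ 3 → g p = if p % 3 = 1 then 1 else -1)
    (h3 : g 3 = 1) :
    ∃ K : ℝ, 0 < K ∧ ∀ N : ℕ, 1 < N → ∀ n d : ℕ, 0 < n → n ≤ N → 0 < d →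
      ((|∑ j ∈ Finset.Icc 1 n, g (j * d)| : ℤ) : ℝ) ≤ K * Real.log N := by
  have hchi : ∀ {m : ℕ}, m % 3 ≠ 0 → g m = if m % 3 = 1 then 1 else -1 :=
    eq_ite_of_mod_three_ne_zero h1 hmul hp
  have habs : ∀ {m : ℕ}, 0 < m → |g m| = 1 := by
    refine abs_eq_one_of_multiplicative h1 hmul fun p hprime => ?_
    rcases eq_or_ne p 3 with rfl | hp3
    · simp [h3]
    · rw [hp p hprime hp3]; split_ifs <;> simp
  have hsum : ∀ n, ∑ j ∈ Icc 1 n, g j = (Nat.digits 3 n).count 1 :=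
    sum_Icc_eq_count_one_digits (fun k hk => by rw [hmul 3 k three_pos hk, h3, one_mul])
      (fun k => by rw [hchi (by omega)]; simp [Nat.add_mod])
      (fun k => by rw [hchi (by omega)]; simp [Nat.add_mod])
  refine ⟨(log 3)⁻¹ + (log 2)⁻¹, by positivity, fun N hN n d hn hnN hd => ?_⟩
  have hsum_mul : ∑ j ∈ Icc 1 n, g (j * d) = (∑ j ∈ Icc 1 n, g j) * g d := by
    rw [sum_mul]
    exact sum_congr rfl fun j hj => hmul j d (mem_Icc.mp hj).1 hd
  rw [hsum_mul, abs_mul, habs hd, mul_one, hsum, Nat.abs_cast, Int.cast_natCast]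
  calc ((Nat.digits 3 n).count 1 : ℝ) ≤ Nat.log 3 n + 1 := by
        exact_mod_cast (List.count_le_length ..).trans
          (Nat.length_digits 3 n (by norm_num) hn.ne').le
    _ ≤ Nat.log 3 N + 1 := by gcongr
    _ ≤ ((log 3)⁻¹ + (log 2)⁻¹) * log N := by exact_mod_cast natLog_add_one_le_mul_log hN
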